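/- arXiv:2412.20385 — 2 statements merged into one kernel-verified Lean document; each statement's English description precedes it below -/
import Mathlib

section
/- Let q = q¹ ⊗ ⋯ ⊗ q^m ∈ Q be such that V is q-integrable and the entropies H(q¹), …, H(q^m) are all finite, and fix i ∈ [m]. Then D_KL(q‖p) = D_KL(q^i ‖ T_i(q^{−i})) − H(q^{−i}) + log Z − log( ∫_ℝ e^{−V̄_i(x, q^{−i})} dx ), where q^{−i} = q¹ ⊗ ⋯ ⊗ q^{i−1} ⊗ q^{i+1} ⊗ ⋯ ⊗ q^m. -/
/-!
Both divergences are taken against Gibbs measures `volume.tilted (-W)`, so each equals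
`∫ log ρ dq + ∫ W dq + log (normaliser)` with `ρ` the Lebesgue density of `q`. The log-density of
the product `q` is the sum of the coordinate log-densities, so its integral splits into the
`i`-th term and `-H(q^{-i})`; and by Fubini `∫ V̄_i(·, q^{-i}) dqⁱ = ∫ V dq`, so the potential
terms cancel.
-/

open MeasureTheory ENNReal

noncomputable section

open scoped Classical in
/-- Kullback--Leibler divergence, valued in `EReal`. -/
def KL {E : Type*} [MeasurableSpace E] (q p : Measure E) : EReal :=
  if q ≪ p ∧ Integrable (fun x => Real.log ((q.rnDeriv p x).toReal)) q
  then ((∫ x, Real.log ((q.rnDeriv p x).toReal) ∂q : ℝ) : EReal)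
  else ⊤

/-- The target measure with density `e^{-V} / Z` where `Z = ∫ e^{-V}`. -/
def target {m : ℕ} (V : (Fin m → ℝ) → ℝ) : Measure (Fin m → ℝ) :=
  volume.withDensity fun x =>
    ENNReal.ofReal (Real.exp (-V x) / ∫ y, Real.exp (-V y))

/-- The differential entropy `H(q) = −∫ ρ log ρ` of a measure `q` on ℝ^d with Lebesgue
density `ρ`. -/
def entropy {d : ℕ} (q : Measure (Fin d → ℝ)) : ℝ :=
  -∫ x, (q.rnDeriv volume x).toReal * Real.log ((q.rnDeriv volume x).toReal)

/-- The differential entropy of a measure on ℝ. -/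
def entropyR (q : Measure ℝ) : ℝ :=
  -∫ x, (q.rnDeriv volume x).toReal * Real.log ((q.rnDeriv volume x).toReal)

/-- The approximate potential `V̄_i(x, μ) = E_{y∼μ} V(y with x inserted in coordinate i)`. -/
def Vbar {m : ℕ} (V : (Fin (m + 1) → ℝ) → ℝ) (i : Fin (m + 1))
    (μ : Measure (Fin m → ℝ)) (x : ℝ) : ℝ :=
  ∫ y, V (i.insertNth x y) ∂μ

/-- The transform `T_i(μ)`: the probability measure on ℝ with density proportional
to `e^{−V̄_i(·, μ)}`. -/
def Ti {m : ℕ} (V : (Fin (m + 1) → ℝ) → ℝ) (i : Fin (m + 1))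
    (μ : Measure (Fin m → ℝ)) : Measure ℝ :=
  volume.withDensity fun x =>
    ENNReal.ofReal (Real.exp (-(Vbar V i μ x)) / ∫ t, Real.exp (-(Vbar V i μ t)))

open Real

namespace MeasureTheory

theorem lintegral_fin_nat_prod_eq_prod {n : ℕ} {E : Fin n → Type*} [∀ i, MeasurableSpace (E i)]
    (μ : ∀ i, Measure (E i)) [∀ i, SigmaFinite (μ i)] {f : ∀ i, E i → ℝ≥0∞}
    (hf : ∀ i, Measurable (f i)) :
    ∫⁻ x, ∏ i, f i (x i) ∂Measure.pi μ = ∏ i, ∫⁻ x, f i x ∂μ i := by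
  induction n with
  | zero => simp
  | succ n ih =>
    -- `Fin.succAbove 0` rather than `Fin.succ`, so that the types `E _` never need rewriting.
    calc _ = ∫⁻ x : E 0 × (∀ j : Fin n, E (Fin.succAbove 0 j)),
            f 0 x.1 * ∏ j, f (Fin.succAbove 0 j) (x.2 j)
            ∂(μ 0).prod (Measure.pi fun j => μ (Fin.succAbove 0 j)) := by
          rw [← (measurePreserving_piFinSuccAbove μ 0).symm.lintegral_comp_emb
            (MeasurableEquiv.measurableEmbedding _)]
          simp only [Fin.prod_univ_succAbove _ 0, MeasurableEquiv.piFinSuccAbove_symm_apply,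
            Fin.insertNthEquiv, Equiv.coe_fn_mk, Fin.insertNth_apply_same,
            Fin.insertNth_apply_succAbove]
      _ = ∏ i, ∫⁻ x, f i x ∂μ i := by
          rw [Fin.prod_univ_succAbove _ 0, ← ih _ fun j => hf _]
          exact lintegral_prod_mul (hf 0).aemeasurable
            (Finset.measurable_prod _ fun j _ => (hf _).comp (measurable_pi_apply j)).aemeasurable

section pi

variable {ι : Type*} [Fintype ι] {E : ι → Type*} [∀ i, MeasurableSpace (E i)]

theorem lintegral_fintype_prod_eq_prod (μ : ∀ i, Measure (E i)) [∀ i, SigmaFinite (μ i)]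
    {f : ∀ i, E i → ℝ≥0∞} (hf : ∀ i, Measurable (f i)) :
    ∫⁻ x, ∏ i, f i (x i) ∂Measure.pi μ = ∏ i, ∫⁻ x, f i x ∂μ i := by
  let e := (Fintype.equivFin ι).symm
  rw [← (measurePreserving_piCongrLeft μ e).lintegral_comp_emb
    (MeasurableEquiv.measurableEmbedding _)]
  simp_rw [← e.prod_comp, MeasurableEquiv.coe_piCongrLeft, Equiv.piCongrLeft_apply_apply]
  exact lintegral_fin_nat_prod_eq_prod _ fun i => hf _

theorem Measure.pi_withDensity (μ : ∀ i, Measure (E i)) [∀ i, SigmaFinite (μ i)]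
    {f : ∀ i, E i → ℝ≥0∞} (hf : ∀ i, Measurable (f i))
    [∀ i, SigmaFinite ((μ i).withDensity (f i))] :
    Measure.pi (fun i => (μ i).withDensity (f i))
      = (Measure.pi μ).withDensity fun x => ∏ i, f i (x i) := by
  refine Measure.pi_eq fun s hs => ?_
  have hbox : (Set.univ.pi s).indicator (fun x => ∏ i, f i (x i))
      = fun x => ∏ i, (s i).indicator (f i) (x i) := by
    ext x
    by_cases hx : x ∈ Set.univ.pi s
    · rw [Set.indicator_of_mem hx]
      exact Finset.prod_congr rfl fun i _ => (Set.indicator_of_mem (hx i trivial) _).symm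
    · obtain ⟨i, hi⟩ : ∃ i, x i ∉ s i := by simpa [Set.mem_univ_pi] using hx
      rw [Set.indicator_of_notMem hx, Finset.prod_eq_zero (Finset.mem_univ i)]
      exact Set.indicator_of_notMem hi _
  rw [withDensity_apply _ (MeasurableSet.univ_pi hs),
    ← lintegral_indicator (MeasurableSet.univ_pi hs), hbox,
    lintegral_fintype_prod_eq_prod _ fun i => (hf i).indicator (hs i)]
  simp_rw [lintegral_indicator (hs _), withDensity_apply _ (hs _)]

variable {q ν : ∀ i, Measure (E i)}

theorem Measure.pi_eq_withDensity_prod_rnDeriv [∀ i, SigmaFinite (q i)]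
    [∀ i, SigmaFinite (ν i)] (hq : ∀ i, q i ≪ ν i) :
    Measure.pi q = (Measure.pi ν).withDensity fun x => ∏ i, (q i).rnDeriv (ν i) (x i) := by
  have : ∀ i, SigmaFinite ((ν i).withDensity ((q i).rnDeriv (ν i))) := fun i => by
    rw [Measure.withDensity_rnDeriv_eq _ _ (hq i)]; infer_instance
  have h := Measure.pi_withDensity ν fun i => Measure.measurable_rnDeriv (q i) (ν i)
  simp_rw [Measure.withDensity_rnDeriv_eq _ _ (hq _)] at h
  exact h

theorem Measure.AbsolutelyContinuous.pi [∀ i, SigmaFinite (q i)] [∀ i, SigmaFinite (ν i)]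
    (hq : ∀ i, q i ≪ ν i) : Measure.pi q ≪ Measure.pi ν := by
  rw [Measure.pi_eq_withDensity_prod_rnDeriv hq]
  exact withDensity_absolutelyContinuous _ _

theorem llr_pi_ae_eq [∀ i, SigmaFinite (q i)] [∀ i, SigmaFinite (ν i)] (hq : ∀ i, q i ≪ ν i) :
    llr (Measure.pi q) (Measure.pi ν) =ᵐ[Measure.pi q] fun x => ∑ i, llr (q i) (ν i) (x i) := by
  have hdens := Measure.rnDeriv_withDensity (Measure.pi ν)
    (f := fun x => ∏ i, (q i).rnDeriv (ν i) (x i)) (by fun_prop)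
  rw [← Measure.pi_eq_withDensity_prod_rnDeriv hq] at hdens
  have hpos : ∀ᵐ x ∂Measure.pi q, ∀ i,
      0 < (q i).rnDeriv (ν i) (x i) ∧ (q i).rnDeriv (ν i) (x i) < ∞ :=
    ae_all_iff.2 fun i => Measure.tendsto_eval_ae_ae.eventually
      ((Measure.rnDeriv_pos (hq i)).and ((hq i).ae_le (Measure.rnDeriv_lt_top _ _)))
  filter_upwards [(Measure.AbsolutelyContinuous.pi hq).ae_le hdens, hpos] with x hx hpos
  rw [llr, hx, ENNReal.toReal_prod, Real.log_prod]
  · rfl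
  · exact fun i _ => (ENNReal.toReal_pos (hpos i).1.ne' (hpos i).2.ne).ne'

variable [∀ i, IsProbabilityMeasure (q i)] [∀ i, SigmaFinite (ν i)]

theorem integrable_llr_pi (hq : ∀ i, q i ≪ ν i)
    (hint : ∀ i, Integrable (llr (q i) (ν i)) (q i)) :
    Integrable (llr (Measure.pi q) (Measure.pi ν)) (Measure.pi q) :=
  (integrable_finsetSum _ fun i _ => integrable_comp_eval (hint i)).congr (llr_pi_ae_eq hq).symm

theorem integral_llr_pi (hq : ∀ i, q i ≪ ν i)
    (hint : ∀ i, Integrable (llr (q i) (ν i)) (q i)) :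
    ∫ x, llr (Measure.pi q) (Measure.pi ν) x ∂Measure.pi q
      = ∑ i, ∫ x, llr (q i) (ν i) x ∂q i := by
  rw [integral_congr_ae (llr_pi_ae_eq hq),
    integral_finsetSum _ fun i _ => integrable_comp_eval (hint i)]
  exact Finset.sum_congr rfl fun i _ => integral_comp_eval (hint i).aestronglyMeasurable

end pi

section insertNth

variable {n : ℕ} {α : Fin (n + 1) → Type*} [∀ i, MeasurableSpace (α i)]
  {μ : ∀ i, Measure (α i)} [∀ i, SigmaFinite (μ i)]
  {F : Type*} [NormedAddCommGroup F] {f : (∀ j, α j) → F}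

theorem Integrable.comp_insertNth (i : Fin (n + 1)) (hf : Integrable f (Measure.pi μ)) :
    Integrable (fun p : α i × (∀ j, α (i.succAbove j)) => f (i.insertNth p.1 p.2))
      ((μ i).prod (Measure.pi fun j => μ (i.succAbove j))) :=
  ((measurePreserving_piFinSuccAbove μ i).symm.integrable_comp_emb
    (MeasurableEquiv.measurableEmbedding _)).2 hf

theorem integral_integral_insertNth [NormedSpace ℝ F] (i : Fin (n + 1))
    (hf : Integrable f (Measure.pi μ)) :
    ∫ x, ∫ y, f (i.insertNth x y) ∂Measure.pi (fun j => μ (i.succAbove j)) ∂μ i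
      = ∫ x, f x ∂Measure.pi μ := by
  rw [← integral_prod _ (hf.comp_insertNth i),
    ← (measurePreserving_piFinSuccAbove μ i).symm.integral_comp']
  rfl

end insertNth

end MeasureTheory

open MeasureTheory

theorem KL_tilted_right {α : Type*} [MeasurableSpace α] {q ν : Measure α}
    [IsProbabilityMeasure q] [SigmaFinite ν] {f : α → ℝ} (hq : q ≪ ν) (hfq : Integrable f q)
    (hfν : Integrable (fun x => exp (f x)) ν) (hllr : Integrable (llr q ν) q) :
    KL q (ν.tilted f)
      = ((∫ x, llr q ν x ∂q - ∫ x, f x ∂q + log (∫ x, exp (f x) ∂ν) : ℝ) : EReal) := by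
  rw [KL, if_pos ⟨hq.trans (absolutelyContinuous_tilted hfν),
    integrable_llr_tilted_right hq hfq hllr hfν⟩]
  exact congrArg _ (integral_llr_tilted_right hq hfq hfν hllr)

theorem entropy_eq_neg_integral_llr {d : ℕ} {q : Measure (Fin d → ℝ)} [SigmaFinite q]
    (hq : q ≪ volume) : entropy q = -∫ x, llr q volume x ∂q := by
  rw [entropy, integral_rnDeriv_mul_log hq]

theorem KL_coordinate_decomposition_general (m : ℕ) (V : (Fin (m + 1) → ℝ) → ℝ)
    (hVint : Integrable fun x => Real.exp (-V x))
    (qi : Fin (m + 1) → Measure ℝ)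
    (hprob : ∀ k, IsProbabilityMeasure (qi k)) (hac : ∀ k, qi k ≪ volume)
    (hVq : Integrable V (Measure.pi qi))
    (hent : ∀ k, Integrable
      (fun x => ((qi k).rnDeriv volume x).toReal * Real.log (((qi k).rnDeriv volume x).toReal)))
    (i : Fin (m + 1))
    (hVbarint : Integrable fun x =>
      Real.exp (-(Vbar V i (Measure.pi fun k : Fin m => qi (i.succAbove k)) x))) :
    KL (Measure.pi qi) (target V)
      = KL (qi i) (Ti V i (Measure.pi fun k : Fin m => qi (i.succAbove k)))
        + ((- entropy (Measure.pi fun k : Fin m => qi (i.succAbove k))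
            + Real.log (∫ y, Real.exp (-V y))
            - Real.log (∫ x, Real.exp
                (-(Vbar V i (Measure.pi fun k : Fin m => qi (i.succAbove k)) x))) : ℝ) : EReal) := by
  set μm := Measure.pi fun k : Fin m => qi (i.succAbove k)
  have hllr : ∀ k, Integrable (llr (qi k) volume) (qi k) := fun k =>
    (integrable_rnDeriv_mul_log_iff (hac k)).1 (hent k)
  have hVbar : Integrable (Vbar V i μm) (qi i) := (hVq.comp_insertNth i).integral_prod_left
  have hVbar_mean : ∫ x, Vbar V i μm x ∂qi i = ∫ x, V x ∂Measure.pi qi :=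
    integral_integral_insertNth i hVq
  have hpi : Measure.pi qi ≪ volume := Measure.AbsolutelyContinuous.pi hac
  have hllr_pi : Integrable (llr (Measure.pi qi) volume) (Measure.pi qi) :=
    integrable_llr_pi hac hllr
  rw [show target V = volume.tilted (fun x => -V x) from rfl,
    show Ti V i μm = volume.tilted (fun x => -Vbar V i μm x) from rfl,
    KL_tilted_right (f := fun x => -V x) hpi hVq.neg hVint hllr_pi,
    KL_tilted_right (f := fun x => -Vbar V i μm x) (hac i) hVbar.neg hVbarint (hllr i),
    entropy_eq_neg_integral_llr (Measure.AbsolutelyContinuous.pi fun k => hac _),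
    volume_pi, volume_pi, integral_llr_pi hac hllr,
    integral_llr_pi (fun k => hac _) fun k => hllr _,
    integral_neg, integral_neg, hVbar_mean,
    ← EReal.coe_add, EReal.coe_eq_coe_iff, Fin.sum_univ_succAbove _ i]
  ring

/-- Coordinatewise decomposition of the KL divergence over the mean-field family:
for `q = q¹ ⊗ ⋯ ⊗ q^m ∈ Q` with `V` `q`-integrable and all marginal entropies finite,
`D_KL(q‖p) = D_KL(qⁱ ‖ T_i(q^{−i})) − H(q^{−i}) + log Z − log ∫ e^{−V̄_i(x, q^{−i})} dx`. -/
theorem KL_coordinate_decomposition (m : ℕ) (V : (Fin (m + 1) → ℝ) → ℝ)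
    (hVcont : Continuous V) (hVint : Integrable fun x => Real.exp (-V x))
    (qi : Fin (m + 1) → Measure ℝ)
    (hprob : ∀ k, IsProbabilityMeasure (qi k)) (hac : ∀ k, qi k ≪ volume)
    (hVq : Integrable V (Measure.pi qi))
    (hent : ∀ k, Integrable
      (fun x => ((qi k).rnDeriv volume x).toReal * Real.log (((qi k).rnDeriv volume x).toReal)))
    (i : Fin (m + 1))
    (hVbarint : Integrable fun x =>
      Real.exp (-(Vbar V i (Measure.pi fun k : Fin m => qi (i.succAbove k)) x))) :
    KL (Measure.pi qi) (target V)
      = KL (qi i) (Ti V i (Measure.pi fun k : Fin m => qi (i.succAbove k)))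
        + ((- entropy (Measure.pi fun k : Fin m => qi (i.succAbove k))
            + Real.log (∫ y, Real.exp (-V y))
            - Real.log (∫ x, Real.exp
                (-(Vbar V i (Measure.pi fun k : Fin m => qi (i.succAbove k)) x))) : ℝ) : EReal) :=
  KL_coordinate_decomposition_general m V hVint qi hprob hac hVq hent i hVbarint
end
end

section
/- Let A ∈ (0,1) and B, C ≥ 0, and let {x_n}_{n≥0} be a sequence of non-negative real numbers satisfying the recursive inequality x_{n+1}² ≤ ((1 − A) x_n + C)² + B² for all n ≥ 0. Then for every n ≥ 0, x_n ≤ (1 − A)ⁿ x₀ + C/A + B/√A. -/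
/-- Lemma 1 of Durmus--Karagulyan: if a sequence of non-negative reals satisfies
`x_{n+1}² ≤ ((1 − A) x_n + C)² + B²` with `A ∈ (0,1)` and `B, C ≥ 0`, then
`x_n ≤ (1 − A)ⁿ x₀ + C/A + B/√A` for all `n`. -/
theorem recursive_inequality_bound (A B C : ℝ) (hA : A ∈ Set.Ioo (0 : ℝ) 1)
    (hB : 0 ≤ B) (hC : 0 ≤ C) (x : ℕ → ℝ) (hx : ∀ n, 0 ≤ x n)
    (hrec : ∀ n : ℕ, (x (n + 1)) ^ 2 ≤ ((1 - A) * x n + C) ^ 2 + B ^ 2) :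
    ∀ n : ℕ, x n ≤ (1 - A) ^ n * x 0 + C / A + B / Real.sqrt A := by
  obtain ⟨hA0, hA1⟩ := hA
  set s := Real.sqrt A with hs
  have hs0 : 0 < s := Real.sqrt_pos.mpr hA0
  have hs2 : s ^ 2 = A := Real.sq_sqrt hA0.le
  have hCA : 0 ≤ C / A := div_nonneg hC hA0.le
  have hBs : 0 ≤ B / s := div_nonneg hB hs0.le
  have h1A : 0 ≤ 1 - A := by linarith
  intro n
  induction n with
  | zero =>
    have := hx 0
    simp only [pow_zero, one_mul]
    linarith
  | succ n ih =>
    have hpn : 0 ≤ (1 - A) ^ n * x 0 := mul_nonneg (pow_nonneg h1A n) (hx 0)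
    have hpn1 : 0 ≤ (1 - A) ^ (n + 1) * x 0 :=
      mul_nonneg (pow_nonneg h1A (n + 1)) (hx 0)
    set M := (1 - A) ^ n * x 0 + C / A + B / s with hM
    have hM0 : 0 ≤ M := by rw [hM]; linarith
    set T := (1 - A) ^ (n + 1) * x 0 + C / A + B / s with hT
    have hT0 : 0 ≤ T := by rw [hT]; linarith
    have hAeq : A * (C / A) = C := by field_simp
    have hseq : A * (B / s) = s * B := by
      rw [← hs2]; field_simp
    have hTeq : T = ((1 - A) * M + C) + s * B := by
      rw [hT, hM, pow_succ]
      linear_combination hAeq + hseq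
    have hBsB : s * (B / s) = B := by field_simp
    have hx1 : (x (n + 1)) ^ 2 ≤ T ^ 2 := by
      have h1 : (x (n + 1)) ^ 2 ≤ ((1 - A) * M + C) ^ 2 + B ^ 2 := by
        have hmono : (1 - A) * x n + C ≤ (1 - A) * M + C := by
          nlinarith [ih]
        nlinarith [hrec n, hx n, mul_nonneg h1A (hx n)]
      have hMge : B / s ≤ M := by rw [hM]; linarith
      have hyge : (1 - A) * (B / s) ≤ (1 - A) * M + C :=
        le_add_of_le_of_nonneg (mul_le_mul_of_nonneg_left hMge h1A) hC
      have hy0 : 0 ≤ (1 - A) * M + C := le_add_of_le_of_nonneg (mul_nonneg h1A hM0) hC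
      have h2 := mul_le_mul_of_nonneg_left hyge (mul_nonneg hs0.le hB)
      have h3 : (1 - A) * B * (s * (B / s)) = (1 - A) * B * B := by rw [hBsB]
      have hexp : T ^ 2 = ((1 - A) * M + C) ^ 2 + 2 * (s * B * ((1 - A) * M + C)) + A * B ^ 2 := by
        rw [hTeq]; linear_combination B ^ 2 * hs2
      have h4 : 0 ≤ s * B * ((1 - A) * M + C) := mul_nonneg (mul_nonneg hs0.le hB) hy0
      clear_value M T
      nlinarith [h1, h2, h3, hexp, h4, hB]
    calc x (n + 1) = Real.sqrt ((x (n + 1)) ^ 2) := (Real.sqrt_sq (hx _)).symm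
      _ ≤ Real.sqrt (T ^ 2) := Real.sqrt_le_sqrt hx1
      _ = T := Real.sqrt_sq hT0
end
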